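/- For 1 ≤ m ≤ n and 1 ≤ k ≤ n-1, the inequality |PF(m,n;k)| < |LPF(m,n+k;k)| is strict. -/

import Mathlib

/-- The first unoccupied spot `s` with `p ≤ s ≤ n`, if any. -/
def forwardSpot (n : ℕ) (occ : Finset ℕ) (p : ℕ) : Option ℕ :=
  (List.range' p (n + 1 - p)).find? (fun s => decide (s ∉ occ))

/-- Classical (forward-only) parking process: cars park one by one, each at the
first free spot `≥` its preference; returns the final occupied set if all park. -/
def classicalPark (n : ℕ) : List ℕ → Finset ℕ → Option (Finset ℕ)
  | [], occ => some occ
  | p :: rest, occ =>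
    match forwardSpot n occ p with
    | none => none
    | some s => classicalPark n rest (insert s occ)

/-- Backward candidates `p-1, p-2, …, p-k` that are at least `1`. -/
def backwardCandidates (k p : ℕ) : List ℕ :=
  ((List.range k).map (fun i => p - (i + 1))).filter (fun s => decide (1 ≤ s))

/-- The spot where a car with preference `p` parks under the `k`-Naples rule. -/
def naplesSpot (n k : ℕ) (occ : Finset ℕ) (p : ℕ) : Option ℕ :=
  if p ∈ occ then
    match (backwardCandidates k p).find? (fun s => decide (s ∉ occ)) with
    | some s => some s
    | none => forwardSpot n occ p
  else some p

/-- `k`-Naples parking process; returns the final occupied set if all cars park. -/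
def naplesPark (n k : ℕ) : List ℕ → Finset ℕ → Option (Finset ℕ)
  | [], occ => some occ
  | p :: rest, occ =>
    match naplesSpot n k occ p with
    | none => none
    | some s => naplesPark n k rest (insert s occ)

/-- All cars park under the `k`-Naples rule and no car with preference `p ≤ k`
finds all of `1, …, p` occupied (no car exits the lot searching backward). -/
def naplesContainedAux (n k : ℕ) : List ℕ → Finset ℕ → Bool
  | [], _ => true
  | p :: rest, occ =>
    (decide (p ≤ k → ¬ Finset.Icc 1 p ⊆ occ)) &&
    match naplesSpot n k occ p with
    | none => false
    | some s => naplesContainedAux n k rest (insert s occ)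

/-- The (1-based) preference list of `a : Fin m → Fin n`. -/
def prefList {m n : ℕ} (a : Fin m → Fin n) : List ℕ :=
  (List.ofFn a).map (fun x => (x : ℕ) + 1)

/-- The set of classical `(m,n)`-parking functions. -/
def PFset (m n : ℕ) : Finset (Fin m → Fin n) :=
  Finset.univ.filter (fun a => (classicalPark n (prefList a) ∅).isSome)

/-- The set of `k`-Naples `(m,n)`-parking functions. -/
def NPFset (m n k : ℕ) : Finset (Fin m → Fin n) :=
  Finset.univ.filter (fun a => (naplesPark n k (prefList a) ∅).isSome)

/-- The set of contained `k`-Naples `(m,n)`-parking functions. -/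
def Bset (m n k : ℕ) : Finset (Fin m → Fin n) :=
  Finset.univ.filter (fun a => naplesContainedAux n k (prefList a) ∅)

/-- The set of `k`-left obstructed `(m,n)`-parking functions: `m` cars on
`n + k` spots whose first `k` spots are obstructed, forward-only rule. -/
def LPFset (m n k : ℕ) : Finset (Fin m → Fin (n + k)) :=
  Finset.univ.filter (fun a => (classicalPark (n + k) (prefList a) (Finset.Icc 1 k)).isSome)

/-!
A `k`-Naples car never parks more than `k` spots before its preference, so in a Naples
parking function at most `n + 1 - t` cars prefer a spot `≥ t + k`. Shifted by the `k`
obstructed spots, this is exactly the Hall-type condition (for every `t`, the cars preferring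
a spot `≥ t` fit into the free spots `≥ t`) under which classical parking succeeds on the
obstructed street; hence every `k`-Naples `(m, n)`-parking function is a `k`-left obstructed
one. The inclusion is strict: a first car preferring spot `n + k`, followed by cars preferring
spot `1`, parks on the obstructed street, but `n + k > n` is no spot of the Naples street.
-/

open Finset

theorem forwardSpot_eq_some_iff {N p s : ℕ} {occ : Finset ℕ} :
    forwardSpot N occ p = some s ↔
      s ∉ occ ∧ p ≤ s ∧ s ≤ N ∧ ∀ y, p ≤ y → y < s → y ∈ occ := by
  simp only [forwardSpot, List.find?_range'_eq_some, List.mem_range'_1, decide_eq_true_eq,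
    Bool.not_eq_eq_eq_not, Bool.not_true, decide_eq_false_iff_not, not_not]
  constructor
  · rintro ⟨hs, ⟨hps, hsN⟩, hmin⟩
    exact ⟨hs, hps, by omega, hmin⟩
  · rintro ⟨hs, hps, hsN, hmin⟩
    exact ⟨hs, ⟨hps, by omega⟩, hmin⟩

theorem forwardSpot_eq_none_iff {N p : ℕ} {occ : Finset ℕ} :
    forwardSpot N occ p = none ↔ ∀ y, p ≤ y → y ≤ N → y ∈ occ := by
  simp only [forwardSpot, List.find?_range'_eq_none, Bool.not_eq_eq_eq_not, Bool.not_true,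
    decide_eq_false_iff_not, not_not]
  exact forall_congr' fun y => imp_congr_right fun _ => ⟨fun h hy => h (by omega),
    fun h hy => h (by omega)⟩

theorem mem_backwardCandidates {k p s : ℕ} (h : s ∈ backwardCandidates k p) :
    p - k ≤ s ∧ s < p := by
  simp only [backwardCandidates, List.mem_filter, List.mem_map, List.mem_range,
    decide_eq_true_eq] at h
  omega

theorem naplesSpot_eq_some {n k p s : ℕ} {occ : Finset ℕ} (hp : p ≤ n)
    (h : naplesSpot n k occ p = some s) : s ∉ occ ∧ p - k ≤ s ∧ s ≤ n := by
  unfold naplesSpot at h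
  split_ifs at h with hmem
  · split at h
    · rename_i hfind
      cases h
      have hfree : s ∉ occ := by simpa using List.find?_some hfind
      have := mem_backwardCandidates (List.mem_of_find?_eq_some hfind)
      exact ⟨hfree, by omega, by omega⟩
    · obtain ⟨hfree, hps, hsn, -⟩ := forwardSpot_eq_some_iff.1 h
      exact ⟨hfree, by omega, hsn⟩
  · cases h
    exact ⟨hmem, by omega, hp⟩

theorem classicalPark_isSome_of_countP_le {N : ℕ} {l : List ℕ} {occ : Finset ℕ}
    (h : ∀ t, l.countP (t ≤ ·) ≤ (Icc t N \ occ).card) :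
    (classicalPark N l occ).isSome := by
  induction l generalizing occ with
  | nil => rfl
  | cons p l ih =>
    have hcount (t : ℕ) :
        l.countP (t ≤ ·) + (if t ≤ p then 1 else 0) ≤ (Icc t N \ occ).card := by
      simpa [List.countP_cons] using h t
    obtain ⟨s, hs⟩ : ∃ s, forwardSpot N occ p = some s := by
      refine Option.ne_none_iff_exists'.1 fun hnone => ?_
      obtain ⟨y, hy⟩ := card_pos.1 (lt_of_lt_of_le (by simp) (hcount p))
      simp only [mem_sdiff, mem_Icc] at hy
      exact hy.2 (forwardSpot_eq_none_iff.1 hnone y hy.1.1 hy.1.2)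
    obtain ⟨hsocc, hps, hsN, hmin⟩ := forwardSpot_eq_some_iff.1 hs
    rw [classicalPark, hs]
    refine ih fun t => ?_
    rw [sdiff_insert]
    rcases le_or_gt t s with hts | hst
    · rw [card_erase_of_mem (mem_sdiff.2 ⟨mem_Icc.2 ⟨hts, hsN⟩, hsocc⟩)]
      rcases le_or_gt t p with htp | hpt
      · have := hcount t
        simp only [htp, if_true] at this
        omega
      · have hfree : Icc p N \ occ = Icc t N \ occ := by
          ext y
          simp only [mem_sdiff, mem_Icc]
          constructor
          · rintro ⟨⟨hpy, hyN⟩, hy⟩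
            exact ⟨⟨by_contra fun hyt => hy (hmin y hpy (by omega)), hyN⟩, hy⟩
          · rintro ⟨⟨hty, hyN⟩, hy⟩
            exact ⟨⟨by omega, hyN⟩, hy⟩
        have hmono : l.countP (t ≤ ·) ≤ l.countP (p ≤ ·) :=
          List.countP_mono_left fun y _ hy => by simp only [decide_eq_true_eq] at hy ⊢; omega
        have := hcount p
        simp only [le_refl, if_true, hfree] at this
        omega
    · rw [erase_eq_of_notMem fun hs => by simp only [mem_sdiff, mem_Icc] at hs; omega]
      exact le_trans (Nat.le_add_right _ _) (hcount t)

theorem naplesPark_countP_le {n k : ℕ} {l : List ℕ} {occ occ' : Finset ℕ}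
    (hl : ∀ p ∈ l, p ≤ n) (h : naplesPark n k l occ = some occ') (t : ℕ) :
    (occ ∩ Icc t n).card + l.countP (t + k ≤ ·) ≤ (occ' ∩ Icc t n).card := by
  induction l generalizing occ with
  | nil =>
    cases h
    simp
  | cons p l ih =>
    rw [naplesPark] at h
    split at h
    · cases h
    · rename_i s hs
      obtain ⟨hsocc, hps, hsn⟩ := naplesSpot_eq_some (hl p (by simp)) hs
      have hrest := ih (fun q hq => hl q (by simp [hq])) h
      rw [List.countP_cons]
      by_cases hpt : t + k ≤ p
      · rw [insert_inter_of_mem (mem_Icc.2 ⟨by omega, hsn⟩),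
          card_insert_of_notMem fun hs => hsocc (mem_inter.1 hs).1] at hrest
        simp only [hpt, decide_true, if_true]
        omega
      · have : (occ ∩ Icc t n).card ≤ (insert s occ ∩ Icc t n).card :=
          card_le_card (inter_subset_inter_right (subset_insert s occ))
        simp only [hpt, decide_false, Bool.false_eq_true, if_false]
        omega

theorem classicalPark_obstructed_isSome_of_naplesPark {n k : ℕ} {l : List ℕ}
    (hlen : l.length ≤ n) (hl : ∀ p ∈ l, p ≤ n) (h : (naplesPark n k l ∅).isSome) :
    (classicalPark (n + k) l (Icc 1 k)).isSome := by
  obtain ⟨occ', hocc'⟩ := Option.isSome_iff_exists.1 h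
  refine classicalPark_isSome_of_countP_le fun t => ?_
  by_cases htk : t ≤ k
  · calc l.countP (t ≤ ·) ≤ l.length := List.countP_le_length
      _ ≤ (Icc (k + 1) (n + k)).card := by rw [Nat.card_Icc]; omega
      _ ≤ (Icc t (n + k) \ Icc 1 k).card :=
        card_le_card fun y => by simp only [mem_sdiff, mem_Icc]; omega
  · have hnaples := naplesPark_countP_le hl hocc' (t - k)
    rw [Nat.sub_add_cancel (by omega)] at hnaples
    have hbound : (occ' ∩ Icc (t - k) n).card ≤ (Icc (t - k) n).card :=
      card_le_card inter_subset_right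
    have hfree : Icc t (n + k) \ Icc 1 k = Icc t (n + k) := sdiff_eq_self_of_disjoint
      (disjoint_left.2 fun y hy hy' => by simp only [mem_Icc] at hy hy'; omega)
    simp only [empty_inter, card_empty, zero_add, Nat.card_Icc] at hnaples hbound
    rw [hfree, Nat.card_Icc]
    omega

theorem classicalPark_obstructed_cons_replicate_isSome {n k r : ℕ} (hr : r < n) :
    (classicalPark (n + k) ((n + k) :: List.replicate r 1) (Icc 1 k)).isSome := by
  refine classicalPark_isSome_of_countP_le fun t => ?_
  simp only [List.countP_cons, List.countP_replicate, decide_eq_true_eq]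
  by_cases ht1 : t ≤ 1
  · rw [if_pos ht1]
    calc r + (if t ≤ n + k then 1 else 0) ≤ (Icc (k + 1) (n + k)).card := by
          rw [Nat.card_Icc]; split_ifs <;> omega
      _ ≤ (Icc t (n + k) \ Icc 1 k).card :=
        card_le_card fun y => by simp only [mem_sdiff, mem_Icc]; omega
  · have hlast : t ≤ n + k → n + k ∈ Icc t (n + k) \ Icc 1 k := fun h => by
      simp only [mem_sdiff, mem_Icc]; omega
    rw [if_neg ht1, zero_add]
    split_ifs with h
    · simpa using card_pos.2 ⟨_, hlast h⟩
    · simp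

theorem prefList_eq_ofFn {m n : ℕ} (a : Fin m → Fin n) :
    prefList a = List.ofFn fun i => (a i : ℕ) + 1 := by
  simp [prefList, ← List.map_eq_flatMap, List.map_ofFn, Function.comp_def]

theorem length_prefList {m n : ℕ} (a : Fin m → Fin n) : (prefList a).length = m := by
  simp [prefList_eq_ofFn]

theorem le_of_mem_prefList {m n p : ℕ} {a : Fin m → Fin n} (hp : p ∈ prefList a) : p ≤ n := by
  obtain ⟨i, rfl⟩ := List.mem_ofFn.1 (prefList_eq_ofFn a ▸ hp)
  exact (a i).isLt

theorem prefList_castLE_comp {m n n' : ℕ} (h : n ≤ n') (a : Fin m → Fin n) :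
    prefList (Fin.castLE h ∘ a) = prefList a := by
  simp [prefList_eq_ofFn]

theorem prefList_cons {m n : ℕ} (x : Fin n) (a : Fin m → Fin n) :
    prefList (Fin.cons x a : Fin (m + 1) → Fin n) = ((x : ℕ) + 1) :: prefList a := by
  simp [prefList_eq_ofFn, List.ofFn_succ]

theorem prefList_const {m n : ℕ} (x : Fin n) :
    prefList (fun _ : Fin m => x) = List.replicate m ((x : ℕ) + 1) := by
  simp [prefList_eq_ofFn]

theorem naples_lt_obstructed_general (m n k : ℕ) (hm : 1 ≤ m) (hmn : m ≤ n)
    (hk1 : 1 ≤ k) :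
    (NPFset m n k).card < (LPFset m n k).card := by
  obtain ⟨r, rfl⟩ := Nat.exists_eq_add_one_of_ne_zero (by omega : m ≠ 0)
  have hnk : n ≤ n + k := by omega
  let widen : (Fin (r + 1) → Fin n) ↪ (Fin (r + 1) → Fin (n + k)) :=
    Function.Embedding.arrowCongrRight (Fin.castLEEmb hnk)
  have hwiden : (NPFset (r + 1) n k).map widen ⊆ LPFset (r + 1) n k := by
    intro b hb
    obtain ⟨a, ha, rfl⟩ := mem_map.1 hb
    simp only [NPFset, LPFset, mem_filter, mem_univ, true_and] at ha ⊢
    rw [show widen a = Fin.castLE hnk ∘ a from rfl, prefList_castLE_comp]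
    exact classicalPark_obstructed_isSome_of_naplesPark (by simp [length_prefList, hmn])
      (fun p hp => le_of_mem_prefList hp) ha
  let w : Fin (r + 1) → Fin (n + k) := Fin.cons ⟨n + k - 1, by omega⟩ fun _ => ⟨0, by omega⟩
  have hw : w ∈ LPFset (r + 1) n k := by
    simp only [LPFset, mem_filter, mem_univ, true_and, w, prefList_cons, prefList_const]
    rw [Nat.sub_add_cancel (by omega)]
    exact classicalPark_obstructed_cons_replicate_isSome (by omega)
  have hw' : w ∉ (NPFset (r + 1) n k).map widen := fun hmem => by
    obtain ⟨a, -, ha⟩ := mem_map.1 hmem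
    have h0 : (a 0 : ℕ) = n + k - 1 := congrArg (fun b => (b 0 : ℕ)) ha
    have := (a 0).isLt
    omega
  rw [← card_map widen]
  exact card_lt_card ((ssubset_iff_of_subset hwiden).2 ⟨w, hw, hw'⟩)

theorem naples_lt_obstructed (m n k : ℕ) (hm : 1 ≤ m) (hmn : m ≤ n)
    (hk1 : 1 ≤ k) (hk : k ≤ n - 1) :
    (NPFset m n k).card < (LPFset m n k).card :=
  naples_lt_obstructed_general m n k hm hmn hk1
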